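/- Let u be a smooth convex function on the closed quarter plane Q = {(x¹,x²) : x¹ ≥ 0, x² ≥ 0} satisfying the M-condition, and suppose u satisfies Guillemin boundary conditions with defining functions x¹, x². For τ > 0 let Ω(τ) = { x ∈ Q : x¹ + x² ≤ τ }. Then every point p ∈ Ω(τ) satisfies dist_g(p, 0) ≤ C√τ, where g is the Hessian metric of u and C = 2/(√2 − 1)·√M (any constant of the form C(M) suffices). -/

import Mathlib

open Set Real

/-- The closed quarter plane `{x¹ ≥ 0, x² ≥ 0}`. -/
def quarterPlane : Set (EuclideanSpace ℝ (Fin 2)) := {x | 0 ≤ x 0 ∧ 0 ≤ x 1}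

/-- The open quarter plane `{x¹ > 0, x² > 0}`. -/
def quarterPlaneInt : Set (EuclideanSpace ℝ (Fin 2)) := {x | 0 < x 0 ∧ 0 < x 1}

/-- The M-condition of Donaldson, "Extremal metrics on toric surfaces, I", Definition 1. -/
def MCondition (M : ℝ) (Ω : Set (EuclideanSpace ℝ (Fin 2)))
    (u : EuclideanSpace ℝ (Fin 2) → ℝ) : Prop :=
  ∀ p q : EuclideanSpace ℝ (Fin 2), p ∈ Ω → q ∈ Ω → p ≠ q →
    (∀ t : ℝ, t ∈ Icc (-(3/2) : ℝ) (3/2) → (1/2 : ℝ) • (p + q) + t • (p - q) ∈ Ω) →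
    fderiv ℝ u q (‖q - p‖⁻¹ • (q - p)) - fderiv ℝ u p (‖q - p‖⁻¹ • (q - p)) ≤ M

namespace Stmt17Aux

open MeasureTheory

lemma isOpen_qpi : IsOpen quarterPlaneInt := by
  have h0 : Continuous fun x : EuclideanSpace ℝ (Fin 2) => x 0 := (continuous_apply _).comp (PiLp.continuous_ofLp _ _)
  have h1 : Continuous fun x : EuclideanSpace ℝ (Fin 2) => x 1 := (continuous_apply _).comp (PiLp.continuous_ofLp _ _)
  exact (isOpen_lt continuous_const h0).inter (isOpen_lt continuous_const h1)

lemma smul_mem_qpi {p : EuclideanSpace ℝ (Fin 2)} (h0 : 0 < p 0) (h1 : 0 < p 1)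
    {c : ℝ} (hc : 0 < c) : c • p ∈ quarterPlaneInt := by
  constructor <;> simp [quarterPlaneInt] <;> positivity

lemma smul_mem_qp {p : EuclideanSpace ℝ (Fin 2)} (hp : p ∈ quarterPlane)
    {c : ℝ} (hc : 0 ≤ c) : c • p ∈ quarterPlane := by
  obtain ⟨h0, h1⟩ := hp
  constructor <;> simp <;> positivity

lemma norm_le_sum {p : EuclideanSpace ℝ (Fin 2)} (hp0 : 0 ≤ p 0) (hp1 : 0 ≤ p 1) :
    ‖p‖ ≤ p 0 + p 1 := by
  rw [EuclideanSpace.norm_eq, Fin.sum_univ_two, Real.norm_eq_abs, Real.norm_eq_abs,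
    abs_of_nonneg hp0, abs_of_nonneg hp1]
  calc Real.sqrt (p 0 ^ 2 + p 1 ^ 2) ≤ Real.sqrt ((p 0 + p 1) ^ 2) :=
        Real.sqrt_le_sqrt (by nlinarith)
    _ = p 0 + p 1 := Real.sqrt_sq (by positivity)

/-! ### Non-differentiability at the boundary -/

lemma not_diff_boundary (u f : EuclideanSpace ℝ (Fin 2) → ℝ)
    (hf : ContDiffOn ℝ (⊤ : ℕ∞) f quarterPlane)
    (hfu : ∀ x ∈ quarterPlane, u x = x 0 * Real.log (x 0) + x 1 * Real.log (x 1) + f x)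
    (y : EuclideanSpace ℝ (Fin 2)) (hy : y ∈ quarterPlane) (i : Fin 2) (hyi : y i = 0) :
    ¬ DifferentiableAt ℝ u y := by
  intro hd
  set e : EuclideanSpace ℝ (Fin 2) := EuclideanSpace.single i 1 with he
  have hcurve : ∀ t : ℝ, 0 ≤ t → y + t • e ∈ quarterPlane := by
    intro t ht
    obtain ⟨h0, h1⟩ := hy
    constructor <;>
      · simp only [he, PiLp.add_apply, PiLp.smul_apply, EuclideanSpace.single_apply,
          smul_eq_mul]
        split_ifs <;> nlinarith
  have hval : ∀ t : ℝ, 0 < t → u (y + t • e) - u y = t * Real.log t + (f (y + t • e) - f y) := by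
    intro t ht
    have h1 := hfu _ (hcurve t ht.le)
    have h2 := hfu _ hy
    have hcoord : ∀ j : Fin 2, (y + t • e) j = if j = i then t else y j := by
      intro j
      simp only [he, PiLp.add_apply, PiLp.smul_apply, EuclideanSpace.single_apply,
        smul_eq_mul]
      split_ifs with h
      · rw [h, hyi]; ring
      · ring
    obtain rfl | rfl : i = 0 ∨ i = 1 := by omega
    · rw [h1, h2, hcoord 0, hcoord 1, hyi]
      norm_num
      ring
    · rw [h1, h2, hcoord 0, hcoord 1, hyi]
      norm_num
      ring
  have hc : HasDerivAt (fun t : ℝ => y + t • e) e 0 := by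
    simpa using ((hasDerivAt_id (0:ℝ)).smul_const e).const_add y
  have hdf := hd.hasFDerivAt
  rw [show y = y + (0:ℝ) • e by simp] at hdf
  have hU : HasDerivAt (fun t : ℝ => u (y + t • e)) (fderiv ℝ u y e) 0 := by
    have := hdf.comp_hasDerivAt 0 hc
    simpa [Function.comp_def] using this
  have hUs : Filter.Tendsto (fun t : ℝ => (u (y + t • e) - u y) / t)
      (nhdsWithin 0 (Ioi 0)) (nhds (fderiv ℝ u y e)) := by
    have := (hasDerivAt_iff_tendsto_slope.1 hU).mono_left
      (nhdsWithin_mono _ (fun x hx => ne_of_gt hx : Ioi (0:ℝ) ⊆ {0}ᶜ))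
    refine this.congr' ?_
    filter_upwards [self_mem_nhdsWithin] with t ht
    simp [slope_def_field, (mem_Ioi.mp ht).ne']
  have hfd : DifferentiableWithinAt ℝ f quarterPlane y :=
    (hf y hy).differentiableWithinAt (by simp)
  have hfdf := hfd.hasFDerivWithinAt
  rw [show y = y + (0:ℝ) • e by simp] at hfdf
  have hF : HasDerivWithinAt (fun t : ℝ => f (y + t • e))
      (fderivWithin ℝ f quarterPlane y e) (Ici 0) 0 := by
    have hmaps : Set.MapsTo (fun t : ℝ => y + t • e) (Ici 0) quarterPlane :=
      fun t ht => hcurve t ht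
    have := hfdf.comp_hasDerivWithinAt 0 (hc.hasDerivWithinAt (s := Ici 0)) hmaps
    simpa [Function.comp_def] using this
  have hFs : Filter.Tendsto (fun t : ℝ => (f (y + t • e) - f y) / t)
      (nhdsWithin 0 (Ioi 0)) (nhds (fderivWithin ℝ f quarterPlane y e)) := by
    have := hasDerivWithinAt_iff_tendsto_slope.1 hF
    rw [show (Ici (0:ℝ)) \ {0} = Ioi 0 by simp [Ici_sdiff_left]] at this
    refine this.congr' ?_
    filter_upwards [self_mem_nhdsWithin] with t ht
    simp [slope_def_field, (mem_Ioi.mp ht).ne']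
  have hlog : Filter.Tendsto Real.log (nhdsWithin 0 (Ioi 0))
      (nhds (fderiv ℝ u y e - fderivWithin ℝ f quarterPlane y e)) := by
    refine (hUs.sub hFs).congr' ?_
    filter_upwards [self_mem_nhdsWithin] with t ht
    rw [div_sub_div_same, hval t ht]
    rw [add_sub_cancel_right]
    exact mul_div_cancel_left₀ _ (ne_of_gt (Set.mem_Ioi.mp ht))
  exact not_tendsto_nhds_of_tendsto_atBot Real.tendsto_log_nhdsGT_zero _ hlog

lemma hess_zero_of_ray_not_diff (u : EuclideanSpace ℝ (Fin 2) → ℝ)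
    (p : EuclideanSpace ℝ (Fin 2))
    (hray : ∀ s : ℝ, 0 < s → ¬ DifferentiableAt ℝ u (s • p)) :
    ∀ t : ℝ, 0 < t → fderiv ℝ (fun y => fderiv ℝ u y p) (t • p) p = 0 := by
  intro t ht
  set G : EuclideanSpace ℝ (Fin 2) → ℝ := fun y => fderiv ℝ u y p with hG
  have hG0 : ∀ s : ℝ, 0 < s → G (s • p) = 0 := by
    intro s hs
    simp [hG, fderiv_zero_of_not_differentiableAt (hray s hs)]
  by_cases hdG : DifferentiableAt ℝ G (t • p)
  · have hc : HasDerivAt (fun s : ℝ => s • p) p t := by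
      simpa using (hasDerivAt_id t).smul_const p
    have hdf := hdG.hasFDerivAt
    have h1 : HasDerivAt (fun s : ℝ => G (s • p)) (fderiv ℝ G (t • p) p) t :=
      by have := hdf.comp_hasDerivAt t hc; exact this
    have h2 : HasDerivAt (fun s : ℝ => G (s • p)) 0 t := by
      refine (hasDerivAt_const t (0:ℝ)).congr_of_eventuallyEq ?_
      filter_upwards [isOpen_Ioi.mem_nhds ht] with s hs
      exact hG0 s hs
    exact h1.unique h2
  · rw [fderiv_zero_of_not_differentiableAt hdG]; rfl

/-! ### Derivative facts along the ray in the interior -/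

section Interior
variable (u : EuclideanSpace ℝ (Fin 2) → ℝ) {M : ℝ}
variable {p : EuclideanSpace ℝ (Fin 2)}

lemma contDiffOn_Gp (husmooth : ContDiffOn ℝ (⊤ : ℕ∞) u quarterPlaneInt) :
    ContDiffOn ℝ (⊤ : ℕ∞) (fun y => fderiv ℝ u y p) quarterPlaneInt :=
  (husmooth.fderiv_of_isOpen isOpen_qpi (by simp)).clm_apply contDiffOn_const

lemma continuousOn_H (husmooth : ContDiffOn ℝ (⊤ : ℕ∞) u quarterPlaneInt)
    (hp0 : 0 < p 0) (hp1 : 0 < p 1) :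
    ContinuousOn (fun t : ℝ => fderiv ℝ (fun y => fderiv ℝ u y p) (t • p) p) (Ioi 0) := by
  have hGp := contDiffOn_Gp u husmooth (p := p)
  have h1 : ContinuousOn (fun y => fderiv ℝ (fun y => fderiv ℝ u y p) y p) quarterPlaneInt :=
    (hGp.continuousOn_fderiv_of_isOpen isOpen_qpi (by simp)).clm_apply continuousOn_const
  have hline : Continuous fun t : ℝ => t • p := continuous_id.smul continuous_const
  exact h1.comp hline.continuousOn (fun t ht => smul_mem_qpi hp0 hp1 ht)

lemma hasDerivAt_h (husmooth : ContDiffOn ℝ (⊤ : ℕ∞) u quarterPlaneInt)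
    (hp0 : 0 < p 0) (hp1 : 0 < p 1) {t : ℝ} (ht : 0 < t) :
    HasDerivAt (fun s : ℝ => fderiv ℝ u (s • p) p)
      (fderiv ℝ (fun y => fderiv ℝ u y p) (t • p) p) t := by
  have hGp := contDiffOn_Gp u husmooth (p := p)
  have hd : DifferentiableAt ℝ (fun y => fderiv ℝ u y p) (t • p) :=
    (hGp.contDiffAt (isOpen_qpi.mem_nhds (smul_mem_qpi hp0 hp1 ht))).differentiableAt (by simp)
  have hline : HasDerivAt (fun s : ℝ => s • p) p t := by
    simpa using (hasDerivAt_id t).smul_const p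
  exact hd.hasFDerivAt.comp_hasDerivAt t hline

lemma hasDerivAt_g (husmooth : ContDiffOn ℝ (⊤ : ℕ∞) u quarterPlaneInt)
    (hp0 : 0 < p 0) (hp1 : 0 < p 1) {t : ℝ} (ht : 0 < t) :
    HasDerivAt (fun s : ℝ => u (s • p)) (fderiv ℝ u (t • p) p) t := by
  have hd : DifferentiableAt ℝ u (t • p) :=
    (husmooth.contDiffAt (isOpen_qpi.mem_nhds (smul_mem_qpi hp0 hp1 ht))).differentiableAt (by simp)
  have hline : HasDerivAt (fun s : ℝ => s • p) p t := by
    simpa using (hasDerivAt_id t).smul_const p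
  exact hd.hasFDerivAt.comp_hasDerivAt t hline

lemma convexOn_g (huconv : ConvexOn ℝ quarterPlane u) (hp0 : 0 < p 0) (hp1 : 0 < p 1) :
    ConvexOn ℝ (Ioi 0) (fun s : ℝ => u (s • p)) := by
  have hpQ : p ∈ quarterPlane := ⟨hp0.le, hp1.le⟩
  refine ⟨convex_Ioi 0, fun s hs t ht a b ha hb hab => ?_⟩
  have := huconv.2 (smul_mem_qp hpQ (le_of_lt hs)) (smul_mem_qp hpQ (le_of_lt ht)) ha hb hab
  simpa [smul_smul, ← add_smul] using this

lemma monotoneOn_h (huconv : ConvexOn ℝ quarterPlane u)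
    (husmooth : ContDiffOn ℝ (⊤ : ℕ∞) u quarterPlaneInt)
    (hp0 : 0 < p 0) (hp1 : 0 < p 1) :
    MonotoneOn (fun s : ℝ => fderiv ℝ u (s • p) p) (Ioi 0) := by
  have hm := (convexOn_g u huconv hp0 hp1).monotoneOn_deriv
    (fun t ht => (hasDerivAt_g u husmooth hp0 hp1 ht).differentiableAt)
  intro s hs t ht hst
  have e1 : deriv (fun s : ℝ => u (s • p)) s = fderiv ℝ u (s • p) p :=
    (hasDerivAt_g u husmooth hp0 hp1 hs).deriv
  have e2 : deriv (fun s : ℝ => u (s • p)) t = fderiv ℝ u (t • p) p :=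
    (hasDerivAt_g u husmooth hp0 hp1 ht).deriv
  dsimp only
  rw [← e1, ← e2]
  exact hm hs ht hst

lemma H_nonneg (huconv : ConvexOn ℝ quarterPlane u)
    (husmooth : ContDiffOn ℝ (⊤ : ℕ∞) u quarterPlaneInt)
    (hp0 : 0 < p 0) (hp1 : 0 < p 1) {t : ℝ} (ht : 0 < t) :
    0 ≤ fderiv ℝ (fun y => fderiv ℝ u y p) (t • p) p := by
  set h : ℝ → ℝ := fun s => fderiv ℝ u (s • p) p with hh
  have h1 := hasDerivAt_iff_tendsto_slope.1 (hasDerivAt_h u husmooth hp0 hp1 ht)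
  have h2 : Filter.Tendsto (slope h t) (nhdsWithin t (Ioi t))
      (nhds (fderiv ℝ (fun y => fderiv ℝ u y p) (t • p) p)) :=
    h1.mono_left (nhdsWithin_mono _ fun x hx => ne_of_gt hx)
  refine ge_of_tendsto h2 ?_
  filter_upwards [self_mem_nhdsWithin] with s hs
  have hts : t < s := mem_Ioi.mp hs
  have hmono := monotoneOn_h u huconv husmooth hp0 hp1 (mem_Ioi.mpr ht)
    (mem_Ioi.mpr (ht.trans hts)) hts.le
  rw [slope_def_field]
  exact div_nonneg (by simpa [hh] using sub_nonneg.mpr hmono) (by linarith)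

lemma key_M_bound (hMcond : MCondition M quarterPlaneInt u)
    (hp0 : 0 < p 0) (hp1 : 0 < p 1) {s t : ℝ} (hs : 0 < s) (hst : s < t) (ht2 : t < 2 * s) :
    fderiv ℝ u (t • p) p - fderiv ℝ u (s • p) p ≤ M * ‖p‖ := by
  have hnp : 0 < ‖p‖ := by
    have : p ≠ 0 := by
      intro h
      rw [h] at hp0
      simp at hp0
    exact norm_pos_iff.mpr this
  have hne : s • p ≠ t • p := by
    intro hEq
    have := congrArg (fun q : EuclideanSpace ℝ (Fin 2) => q 0) hEq
    simp only [PiLp.smul_apply, smul_eq_mul] at this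
    nlinarith
  have hseg : ∀ r : ℝ, r ∈ Icc (-(3/2) : ℝ) (3/2) →
      (1/2 : ℝ) • (s • p + t • p) + r • (s • p - t • p) ∈ quarterPlaneInt := by
    intro r hr
    have heq : (1/2 : ℝ) • (s • p + t • p) + r • (s • p - t • p)
        = ((s + t)/2 + r * (s - t)) • p := by module
    rw [heq]
    exact smul_mem_qpi hp0 hp1 (by nlinarith [hr.1, hr.2])
  have hq := hMcond (s • p) (t • p) (smul_mem_qpi hp0 hp1 hs)
    (smul_mem_qpi hp0 hp1 (hs.trans hst)) hne hseg
  have hsub : t • p - s • p = (t - s) • p := by module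
  have hnorm : ‖t • p - s • p‖ = (t - s) * ‖p‖ := by
    rw [hsub, norm_smul, Real.norm_eq_abs, abs_of_pos (by linarith)]
  rw [hnorm, hsub] at hq
  have hsm : ((t - s) * ‖p‖)⁻¹ • ((t - s) • p) = ‖p‖⁻¹ • p := by
    rw [smul_smul]
    congr 1
    field_simp
    exact div_self (ne_of_gt (by nlinarith))
  rw [hsm] at hq
  have hmap : ∀ y : EuclideanSpace ℝ (Fin 2),
      fderiv ℝ u y (‖p‖⁻¹ • p) = ‖p‖⁻¹ * fderiv ℝ u y p := by
    intro y
    rw [(fderiv ℝ u y).map_smul, smul_eq_mul]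
  rw [hmap, hmap] at hq
  have := mul_le_mul_of_nonneg_left hq hnp.le
  calc fderiv ℝ u (t • p) p - fderiv ℝ u (s • p) p
      = ‖p‖ * (‖p‖⁻¹ * fderiv ℝ u (t • p) p - ‖p‖⁻¹ * fderiv ℝ u (s • p) p) := by
        field_simp
    _ ≤ ‖p‖ * M := this
    _ = M * ‖p‖ := mul_comm _ _

end Interior

/-! ### The dyadic interval estimate -/

lemma interval_bound {H h : ℝ → ℝ} {K : ℝ} (hK : 0 < K)
    (hHcont : ContinuousOn H (Ioi 0))
    (hHnn : ∀ t : ℝ, 0 < t → 0 ≤ H t)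
    (hderiv : ∀ t : ℝ, 0 < t → HasDerivAt h (H t) t)
    (hbound : ∀ s t : ℝ, 0 < s → s < t → t < 2*s → h t - h s ≤ K)
    {s t : ℝ} (hs : 0 < s) (hst : s < t) (ht2 : t < 2*s) :
    ∫⁻ x in Ioc s t, ENNReal.ofReal (Real.sqrt (H x))
      ≤ ENNReal.ofReal (Real.sqrt (K * (t - s))) := by
  have hts : 0 < t - s := by linarith
  set c : ℝ := K / (t - s) with hcdef
  have hc : 0 < c := div_pos hK hts
  have hsc : 0 < Real.sqrt c := Real.sqrt_pos.mpr hc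
  set ψ : ℝ → ℝ := fun x => (H x + c) / (2 * Real.sqrt c) with hψdef
  have hsubIcc : Icc s t ⊆ Ioi 0 := fun x hx => lt_of_lt_of_le hs hx.1
  have hHc : ContinuousOn H (Icc s t) := hHcont.mono hsubIcc
  have step1 : ∫⁻ x in Ioc s t, ENNReal.ofReal (Real.sqrt (H x))
      ≤ ∫⁻ x in Ioc s t, ENNReal.ofReal (ψ x) := by
    refine lintegral_mono_ae ?_
    filter_upwards [ae_restrict_mem measurableSet_Ioc] with x hx
    refine ENNReal.ofReal_le_ofReal ?_
    have hx0 : 0 < x := hs.trans hx.1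
    have hH := hHnn x hx0
    have hss : Real.sqrt (H x) * Real.sqrt c ≤ (H x + c) / 2 := by
      nlinarith [sq_nonneg (Real.sqrt (H x) - Real.sqrt c), Real.sq_sqrt hH,
        Real.sq_sqrt hc.le, Real.sqrt_nonneg (H x), Real.sqrt_nonneg c]
    calc Real.sqrt (H x) = Real.sqrt (H x) * Real.sqrt c / Real.sqrt c := by
          field_simp
      _ ≤ (H x + c) / 2 / Real.sqrt c := by gcongr
      _ = ψ x := by rw [hψdef]; ring
  have hψcont : ContinuousOn ψ (Icc s t) :=
    (hHc.add continuousOn_const).div_const _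
  have hψint : IntegrableOn ψ (Ioc s t) :=
    (hψcont.integrableOn_Icc).mono_set Ioc_subset_Icc_self
  have step2 : ∫⁻ x in Ioc s t, ENNReal.ofReal (ψ x)
      = ENNReal.ofReal (∫ x in Ioc s t, ψ x) := by
    rw [ofReal_integral_eq_lintegral_ofReal hψint]
    filter_upwards [ae_restrict_mem measurableSet_Ioc] with x hx
    have hx0 : 0 < x := hs.trans hx.1
    have := hHnn x hx0
    have : 0 ≤ H x + c := by linarith
    positivity
  have hHuIcc : ContinuousOn H (uIcc s t) := by rw [uIcc_of_le hst.le]; exact hHc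
  have hftc : ∫ x in s..t, H x = h t - h s := by
    refine intervalIntegral.integral_eq_sub_of_hasDerivAt ?_ hHuIcc.intervalIntegrable
    intro x hx
    rw [uIcc_of_le hst.le] at hx
    exact hderiv x (lt_of_lt_of_le hs hx.1)
  have step3 : ∫ x in Ioc s t, ψ x = ((h t - h s) + (t - s) * c) / (2 * Real.sqrt c) := by
    rw [← intervalIntegral.integral_of_le hst.le]
    have : ∫ x in s..t, ψ x = (∫ x in s..t, (H x + c)) / (2 * Real.sqrt c) := by
      simp only [hψdef]
      rw [intervalIntegral.integral_div]
    rw [this, intervalIntegral.integral_add hHuIcc.intervalIntegrable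
      intervalIntegrable_const, hftc, intervalIntegral.integral_const, smul_eq_mul]
  have hval : ((h t - h s) + (t - s) * c) / (2 * Real.sqrt c) ≤ Real.sqrt (K * (t - s)) := by
    have h1 : h t - h s ≤ K := hbound s t hs hst ht2
    have h2 : (t - s) * c = K := by rw [hcdef]; field_simp [hts.ne']
    have h3 : K / Real.sqrt c = Real.sqrt (K * (t - s)) := by
      rw [show K * (t - s) = K^2 / c by rw [hcdef]; field_simp,
        Real.sqrt_div (by positivity) c, Real.sqrt_sq hK.le]
    calc ((h t - h s) + (t - s) * c) / (2 * Real.sqrt c)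
        ≤ (K + K) / (2 * Real.sqrt c) := by
          rw [h2]
          gcongr
      _ = K / Real.sqrt c := by ring
      _ = Real.sqrt (K * (t - s)) := h3
  calc ∫⁻ x in Ioc s t, ENNReal.ofReal (Real.sqrt (H x))
      ≤ ∫⁻ x in Ioc s t, ENNReal.ofReal (ψ x) := step1
    _ = ENNReal.ofReal (∫ x in Ioc s t, ψ x) := step2
    _ ≤ ENNReal.ofReal (Real.sqrt (K * (t - s))) := by
        apply ENNReal.ofReal_le_ofReal
        rw [step3]
        exact hval

/-! ### Covering, geometric series, numerics -/

lemma cover_Ioc : Ioc (0:ℝ) 1 ⊆ ⋃ k : ℕ, Ioc ((2/3:ℝ)^(k+1)) ((2/3:ℝ)^k) := by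
  intro x hx
  have hx0 : 0 < x := hx.1
  have hr1 : (2/3:ℝ) < 1 := by norm_num
  have hex : ∃ n : ℕ, (2/3:ℝ)^n < x := exists_pow_lt_of_lt_one hx0 hr1
  classical
  have hklt : (2/3:ℝ)^(Nat.find hex) < x := Nat.find_spec hex
  have hkpos : Nat.find hex ≠ 0 := by
    intro h
    rw [h] at hklt
    simp at hklt
    linarith [hx.2]
  obtain ⟨m, hm⟩ := Nat.exists_eq_succ_of_ne_zero hkpos
  rw [hm] at hklt
  exact mem_iUnion.mpr ⟨m, hklt, not_lt.mp (Nat.find_min hex (by omega))⟩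

lemma geom_sum_bound (A : ℝ) (hA : 0 ≤ A) :
    ∑' k : ℕ, ENNReal.ofReal (A * (Real.sqrt (2/3))^k)
      = ENNReal.ofReal (A * (1 - Real.sqrt (2/3))⁻¹) := by
  have hρ : Real.sqrt (2/3) < 1 := by
    rw [show (1:ℝ) = Real.sqrt 1 by simp]
    exact Real.sqrt_lt_sqrt (by norm_num) (by norm_num)
  have hρ0 : 0 ≤ Real.sqrt (2/3) := Real.sqrt_nonneg _
  have hsum : Summable (fun k : ℕ => A * (Real.sqrt (2/3))^k) :=
    (summable_geometric_of_lt_one hρ0 hρ).mul_left A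
  rw [← ENNReal.ofReal_tsum_of_nonneg (fun k => by positivity) hsum]
  congr 1
  rw [tsum_mul_left, tsum_geometric_of_lt_one hρ0 hρ]

lemma sqrt2_gt_one : (1:ℝ) < Real.sqrt 2 := by
  rw [show (1:ℝ) = Real.sqrt 1 by simp]
  exact Real.sqrt_lt_sqrt (by norm_num) (by norm_num)

lemma sqrt_pow_aux (x : ℝ) (hx : 0 ≤ x) (k : ℕ) :
    Real.sqrt (x ^ k) = (Real.sqrt x) ^ k := by
  induction k with
  | zero => simp
  | succ n ih => rw [pow_succ, pow_succ, Real.sqrt_mul (by positivity), ih]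

lemma final_num {M τ np : ℝ} (hM : 0 < M) (hτ : 0 < τ) (hnp : 0 ≤ np) (h : np ≤ τ) :
    Real.sqrt (M * np * (1/3)) * (1 - Real.sqrt (2/3))⁻¹
      ≤ (2 * (Real.sqrt 2 - 1)⁻¹ * Real.sqrt M) * Real.sqrt τ := by
  have hρ : Real.sqrt (2/3) < 1 := by
    rw [show (1:ℝ) = Real.sqrt 1 by simp]
    exact Real.sqrt_lt_sqrt (by norm_num) (by norm_num)
  have h2 := sqrt2_gt_one
  have hx : Real.sqrt (2/3) ^ 2 = 2/3 := Real.sq_sqrt (by norm_num)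
  have hy : Real.sqrt (1/3) ^ 2 = 1/3 := Real.sq_sqrt (by norm_num)
  have hs2 : Real.sqrt 2 ^ 2 = 2 := Real.sq_sqrt (by norm_num)
  have hx0 : 0 ≤ Real.sqrt (2/3) := Real.sqrt_nonneg _
  have hy0 : 0 ≤ Real.sqrt (1/3) := Real.sqrt_nonneg _
  have hs20 : 0 ≤ Real.sqrt 2 := Real.sqrt_nonneg _
  have hmul : Real.sqrt (1/3) * Real.sqrt 2 = Real.sqrt (2/3) := by
    rw [← Real.sqrt_mul (by norm_num : (0:ℝ) ≤ 1/3)]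
    norm_num
  have hkey : Real.sqrt (1/3) * (1 - Real.sqrt (2/3))⁻¹ ≤ 2 * (Real.sqrt 2 - 1)⁻¹ := by
    rw [← div_eq_mul_inv, ← div_eq_mul_inv, div_le_div_iff₀ (by linarith) (by linarith)]
    nlinarith [hmul, sq_nonneg (3 * Real.sqrt (2/3) - 2 - Real.sqrt (1/3)),
      mul_nonneg hx0 hy0]
  have hdec : Real.sqrt (M * np * (1/3)) ≤ Real.sqrt M * Real.sqrt τ * Real.sqrt (1/3) := by
    rw [Real.sqrt_mul (by positivity), Real.sqrt_mul hM.le]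
    have : Real.sqrt np ≤ Real.sqrt τ := Real.sqrt_le_sqrt h
    gcongr
  calc Real.sqrt (M * np * (1/3)) * (1 - Real.sqrt (2/3))⁻¹
      ≤ (Real.sqrt M * Real.sqrt τ * Real.sqrt (1/3)) * (1 - Real.sqrt (2/3))⁻¹ := by
        gcongr
      _ = (Real.sqrt M * Real.sqrt τ) * (Real.sqrt (1/3) * (1 - Real.sqrt (2/3))⁻¹) := by ring
      _ ≤ (Real.sqrt M * Real.sqrt τ) * (2 * (Real.sqrt 2 - 1)⁻¹) := by
        gcongr
      _ = (2 * (Real.sqrt 2 - 1)⁻¹ * Real.sqrt M) * Real.sqrt τ := by ring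

lemma rhs_nonneg {M τ : ℝ} (hM : 0 < M) (hτ : 0 < τ) :
    0 ≤ (2 * (Real.sqrt 2 - 1)⁻¹ * Real.sqrt M) * Real.sqrt τ := by
  have h2 := sqrt2_gt_one
  exact mul_nonneg (mul_nonneg (mul_nonneg (by norm_num)
    (inv_nonneg.mpr (by linarith))) (Real.sqrt_nonneg _)) (Real.sqrt_nonneg _)

/-! ### The interior estimate -/

lemma interior_est (u : EuclideanSpace ℝ (Fin 2) → ℝ) (M : ℝ) (hM : 0 < M)
    (huconv : ConvexOn ℝ quarterPlane u)
    (husmooth : ContDiffOn ℝ (⊤ : ℕ∞) u quarterPlaneInt)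
    (hMcond : MCondition M quarterPlaneInt u)
    (τ : ℝ) (hτ : 0 < τ) (p : EuclideanSpace ℝ (Fin 2))
    (hp0 : 0 < p 0) (hp1 : 0 < p 1) (hpτ : p 0 + p 1 ≤ τ) :
    ∫ t in (0:ℝ)..1, Real.sqrt (fderiv ℝ (fun y => fderiv ℝ u y p) (t • p) p)
      ≤ (2 * (Real.sqrt 2 - 1)⁻¹ * Real.sqrt M) * Real.sqrt τ := by
  set H : ℝ → ℝ := fun t => fderiv ℝ (fun y => fderiv ℝ u y p) (t • p) p with hHdef
  have hnp : 0 < ‖p‖ := by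
    have : p ≠ 0 := by
      intro h
      rw [h] at hp0
      simp at hp0
    exact norm_pos_iff.mpr this
  have hpτ' : ‖p‖ ≤ τ := (norm_le_sum hp0.le hp1.le).trans hpτ
  set K : ℝ := M * ‖p‖ with hKdef
  have hK : 0 < K := mul_pos hM hnp
  have hHcont : ContinuousOn H (Ioi 0) := continuousOn_H u husmooth hp0 hp1
  have hHnn : ∀ t : ℝ, 0 < t → 0 ≤ H t := fun t ht => H_nonneg u huconv husmooth hp0 hp1 ht
  have hderiv : ∀ t : ℝ, 0 < t → HasDerivAt (fun s : ℝ => fderiv ℝ u (s • p) p) (H t) t :=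
    fun t ht => hasDerivAt_h u husmooth hp0 hp1 ht
  have hbound : ∀ s t : ℝ, 0 < s → s < t → t < 2*s →
      (fun s : ℝ => fderiv ℝ u (s • p) p) t - (fun s : ℝ => fderiv ℝ u (s • p) p) s ≤ K :=
    fun s t hs hst ht2 => key_M_bound u hMcond hp0 hp1 hs hst ht2
  have hIb : ∀ k : ℕ, ∫⁻ x in Ioc ((2/3:ℝ)^(k+1)) ((2/3:ℝ)^k), ENNReal.ofReal (Real.sqrt (H x))
      ≤ ENNReal.ofReal (Real.sqrt (K * ((2/3:ℝ)^k - (2/3:ℝ)^(k+1)))) := by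
    intro k
    have hsp : (0:ℝ) < (2/3:ℝ)^(k+1) := by positivity
    have hst : (2/3:ℝ)^(k+1) < (2/3:ℝ)^k :=
      pow_lt_pow_right_of_lt_one₀ (by norm_num) (by norm_num) (Nat.lt_succ_self k)
    have ht2 : (2/3:ℝ)^k < 2 * (2/3:ℝ)^(k+1) := by
      rw [pow_succ]
      nlinarith [pow_pos (show (0:ℝ) < 2/3 by norm_num) k]
    exact interval_bound hK hHcont hHnn hderiv hbound hsp hst ht2
  have hsm : AEStronglyMeasurable (fun t => Real.sqrt (H t)) (volume.restrict (Ioc (0:ℝ) 1)) := by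
    have hc : ContinuousOn (fun t => Real.sqrt (H t)) (Ioc (0:ℝ) 1) :=
      Real.continuous_sqrt.comp_continuousOn (hHcont.mono Ioc_subset_Ioi_self)
    exact (hc.aemeasurable measurableSet_Ioc).aestronglyMeasurable
  rw [intervalIntegral.integral_of_le zero_le_one,
    integral_eq_lintegral_of_nonneg_ae (Filter.Eventually.of_forall fun x => Real.sqrt_nonneg _)
      hsm]
  apply ENNReal.toReal_le_of_le_ofReal (rhs_nonneg hM hτ)
  calc ∫⁻ t in Ioc (0:ℝ) 1, ENNReal.ofReal (Real.sqrt (H t))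
      ≤ ∫⁻ t in ⋃ k : ℕ, Ioc ((2/3:ℝ)^(k+1)) ((2/3:ℝ)^k), ENNReal.ofReal (Real.sqrt (H t)) :=
        lintegral_mono_set cover_Ioc
    _ ≤ ∑' k : ℕ, ∫⁻ t in Ioc ((2/3:ℝ)^(k+1)) ((2/3:ℝ)^k), ENNReal.ofReal (Real.sqrt (H t)) :=
        lintegral_iUnion_le _ _
    _ ≤ ∑' k : ℕ, ENNReal.ofReal (Real.sqrt (K * ((2/3:ℝ)^k - (2/3:ℝ)^(k+1)))) :=
        ENNReal.tsum_le_tsum hIb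
    _ = ∑' k : ℕ, ENNReal.ofReal (Real.sqrt (K * (1/3)) * (Real.sqrt (2/3))^k) := by
        congr 1
        funext k
        congr 1
        rw [show K * ((2/3:ℝ)^k - (2/3:ℝ)^(k+1)) = (K * (1/3)) * (2/3)^k by
          rw [pow_succ]; ring,
          Real.sqrt_mul (by positivity), sqrt_pow_aux _ (by norm_num)]
    _ = ENNReal.ofReal (Real.sqrt (K * (1/3)) * (1 - Real.sqrt (2/3))⁻¹) :=
        geom_sum_bound _ (Real.sqrt_nonneg _)
    _ ≤ ENNReal.ofReal ((2 * (Real.sqrt 2 - 1)⁻¹ * Real.sqrt M) * Real.sqrt τ) :=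
        ENNReal.ofReal_le_ofReal (final_num hM hτ (norm_nonneg p) hpτ')

end Stmt17Aux

open Stmt17Aux MeasureTheory

/-- Donaldson, "Extremal metrics on toric surfaces, I", distance estimate in the proof of
Theorem 3: if `u` is convex on the quarter plane `Q = {x¹, x² ≥ 0}`, smooth in the interior,
satisfies the `M`-condition and Guillemin boundary conditions with defining functions
`x¹, x²`, then every point of `Ω(τ) = {x ∈ Q : x¹ + x² ≤ τ}` is within `g`-distance `C√τ`
of the origin, where `g` is the Hessian metric and `C = 2(√2 − 1)⁻¹ √M`; here the distance
bound is expressed by exhibiting a path from `0` to `p` in `Q` of `g`-length at most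
`C√τ`. -/
theorem stmt17 (u : EuclideanSpace ℝ (Fin 2) → ℝ) (M : ℝ) (hM : 0 < M)
    (hucont : ContinuousOn u quarterPlane)
    (huconv : ConvexOn ℝ quarterPlane u)
    (husmooth : ContDiffOn ℝ (⊤ : ℕ∞) u quarterPlaneInt)
    (hMcond : MCondition M quarterPlaneInt u)
    (hGuillemin : ∃ f : EuclideanSpace ℝ (Fin 2) → ℝ,
      ContDiffOn ℝ (⊤ : ℕ∞) f quarterPlane ∧
      ∀ x ∈ quarterPlane, u x = x 0 * Real.log (x 0) + x 1 * Real.log (x 1) + f x)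
    (τ : ℝ) (hτ : 0 < τ) (p : EuclideanSpace ℝ (Fin 2))
    (hp : p ∈ quarterPlane) (hpτ : p 0 + p 1 ≤ τ) :
    ∃ γ : ℝ → EuclideanSpace ℝ (Fin 2), Differentiable ℝ γ ∧ γ 0 = 0 ∧ γ 1 = p ∧
      (∀ t ∈ Icc (0:ℝ) 1, γ t ∈ quarterPlane) ∧
      ∫ t in (0:ℝ)..1,
          Real.sqrt (fderiv ℝ (fun y => fderiv ℝ u y (deriv γ t)) (γ t) (deriv γ t))
        ≤ (2 * (Real.sqrt 2 - 1)⁻¹ * Real.sqrt M) * Real.sqrt τ := by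
  obtain ⟨f, hf, hfu⟩ := hGuillemin
  obtain ⟨hp0, hp1⟩ := hp
  rcases eq_or_lt_of_le hp0 with h0 | h0
  · rcases eq_or_lt_of_le hp1 with h1 | h1
    · -- p = 0 : take the constant path
      have hp00 : p = 0 := by
        ext i
        obtain rfl | rfl : i = 0 ∨ i = 1 := by omega
        · exact h0.symm
        · exact h1.symm
      refine ⟨fun _ => 0, differentiable_const _, rfl, by rw [hp00], fun t _ => ⟨by simp, by simp⟩, ?_⟩
      have hzero : ∀ t : ℝ, Real.sqrt (fderiv ℝ
          (fun y => fderiv ℝ u y (deriv (fun _ : ℝ => (0 : EuclideanSpace ℝ (Fin 2))) t))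
          ((fun _ : ℝ => (0 : EuclideanSpace ℝ (Fin 2))) t)
          (deriv (fun _ : ℝ => (0 : EuclideanSpace ℝ (Fin 2))) t)) = 0 := by
        intro t
        rw [deriv_const]
        have he : (fun y : EuclideanSpace ℝ (Fin 2) => fderiv ℝ u y (0 : EuclideanSpace ℝ (Fin 2)))
            = fun _ => (0:ℝ) := funext fun y => (fderiv ℝ u y).map_zero
        rw [he, fderiv_fun_const]
        simp
      simp only [hzero]
      rw [intervalIntegral.integral_zero]
      exact rhs_nonneg hM hτ
    · -- p 0 = 0, p 1 > 0 : path along the boundary, zero length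
      have hray : ∀ s : ℝ, 0 < s → ¬ DifferentiableAt ℝ u (s • p) := by
        intro s hs
        refine not_diff_boundary u f hf hfu (s • p) (smul_mem_qp ⟨hp0, hp1⟩ hs.le) 0 ?_
        simp [← h0]
      have hH0 := hess_zero_of_ray_not_diff u p hray
      refine ⟨fun t => t • p, fun t => ((hasDerivAt_id t).smul_const p).differentiableAt,
        zero_smul _ _, one_smul _ _, fun t ht => smul_mem_qp ⟨hp0, hp1⟩ ht.1, ?_⟩
      have hd : ∀ t : ℝ, deriv (fun s : ℝ => s • p) t = p := fun t => by
        simpa using ((hasDerivAt_id t).smul_const p).deriv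
      simp only [hd]
      have hzero : ∀ t ∈ Ioc (0:ℝ) 1,
          Real.sqrt (fderiv ℝ (fun y => fderiv ℝ u y p) (t • p) p) = 0 := by
        intro t ht
        rw [hH0 t ht.1, Real.sqrt_zero]
      rw [intervalIntegral.integral_of_le zero_le_one,
        setIntegral_congr_fun measurableSet_Ioc hzero]
      simp only [integral_zero]
      exact rhs_nonneg hM hτ
  · rcases eq_or_lt_of_le hp1 with h1 | h1
    · -- p 1 = 0, p 0 > 0 : path along the boundary, zero length
      have hray : ∀ s : ℝ, 0 < s → ¬ DifferentiableAt ℝ u (s • p) := by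
        intro s hs
        refine not_diff_boundary u f hf hfu (s • p) (smul_mem_qp ⟨hp0, hp1⟩ hs.le) 1 ?_
        simp [← h1]
      have hH0 := hess_zero_of_ray_not_diff u p hray
      refine ⟨fun t => t • p, fun t => ((hasDerivAt_id t).smul_const p).differentiableAt,
        zero_smul _ _, one_smul _ _, fun t ht => smul_mem_qp ⟨hp0, hp1⟩ ht.1, ?_⟩
      have hd : ∀ t : ℝ, deriv (fun s : ℝ => s • p) t = p := fun t => by
        simpa using ((hasDerivAt_id t).smul_const p).deriv
      simp only [hd]
      have hzero : ∀ t ∈ Ioc (0:ℝ) 1,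
          Real.sqrt (fderiv ℝ (fun y => fderiv ℝ u y p) (t • p) p) = 0 := by
        intro t ht
        rw [hH0 t ht.1, Real.sqrt_zero]
      rw [intervalIntegral.integral_of_le zero_le_one,
        setIntegral_congr_fun measurableSet_Ioc hzero]
      simp only [integral_zero]
      exact rhs_nonneg hM hτ
    · -- interior case
      refine ⟨fun t => t • p, fun t => ((hasDerivAt_id t).smul_const p).differentiableAt,
        zero_smul _ _, one_smul _ _, fun t ht => smul_mem_qp ⟨hp0, hp1⟩ ht.1, ?_⟩
      have hd : ∀ t : ℝ, deriv (fun s : ℝ => s • p) t = p := fun t => by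
        simpa using ((hasDerivAt_id t).smul_const p).deriv
      simp only [hd]
      exact interior_est u M hM huconv husmooth hMcond τ hτ p h0 h1 hpτ
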